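/- There exists a fusion Riesz basis for ℝ³ that admits an alternate dual fusion frame distinct from its canonical dual, and that alternate dual is not a fusion Riesz basis. Concretely: W₁ = span{(1,0,0)}, W₂ = span{(1,1,0)}, W₃ = span{(0,0,1)} with weights 1 form a fusion Riesz basis, and V₁ = ℝ²×{0}, V₂ = span{(0,1,0)}, V₃ = span{(0,0,1)} with weights 1 satisfy Σ π_{V_i} S_W⁻¹ π_{W_i} f = f for all f ∈ ℝ³, yet {V_i} is not a fusion Riesz basis. -/

import Mathlib

open scoped InnerProductSpace

/-- Orthogonal projection onto a complete subspace of a real Hilbert space. -/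
noncomputable def fusionProjR {H : Type*} [NormedAddCommGroup H] [InnerProductSpace ℝ H]
    (K : Submodule ℝ H) [CompleteSpace K] : H →L[ℝ] H :=
  K.subtypeL.comp (K.orthogonalProjectionOnto)

/-- Fusion Riesz basis (weight one) over `ℝ`. -/
def IsFusionRieszBasisR {H : Type*} [NormedAddCommGroup H] [InnerProductSpace ℝ H]
    {ι : Type*} (W : ι → Submodule ℝ H) : Prop :=
  (⨆ i, W i).topologicalClosure = ⊤ ∧
  ∃ C D : ℝ, 0 < C ∧ C ≤ D ∧
    ∀ (J : Finset ι) (f : ι → H), (∀ j, f j ∈ W j) →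
      C * Real.sqrt (∑ j ∈ J, ‖f j‖ ^ 2) ≤ ‖∑ j ∈ J, f j‖ ∧
        ‖∑ j ∈ J, f j‖ ≤ D * Real.sqrt (∑ j ∈ J, ‖f j‖ ^ 2)

/-!
The lines `W i = ℝ ∙ w i` through the basis `w = (e₀, e₀ + e₁, e₂)` of `ℝ³` are independent and
span, so the synthesis map `(f i) ↦ ∑ f i` from `⨁ W i` (with the `ℓ²` norm) is a linear
isomorphism of finite-dimensional spaces, hence bounded above and below: `W` is a fusion Riesz
basis. Its frame operator `S = ∑ π_{W i}` is injective (`⟪S f, f⟫ = ∑ ‖π_{W i} f‖²`), hence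
invertible, and any family with `S⁻¹ (W i) ⊆ V i` is a dual, because then
`∑ π_{V i} S⁻¹ π_{W i} = S⁻¹ ∑ π_{W i} = 1`. Here `S⁻¹` maps `w` to `(e₀ - e₁, 2 e₁, e₂)`, which lie
in `V`. The plane `V 0` strictly contains the line `S⁻¹ (W 0)`, and `V` is not a fusion Riesz basis
since `V 0 ∩ V 1 ∋ e₁`, whereas the lower Riesz bound forces independence.
-/

section FusionFrame

variable {H : Type*} [NormedAddCommGroup H] [InnerProductSpace ℝ H] {ι : Type*}

theorem fusionProjR_apply (K : Submodule ℝ H) [CompleteSpace K] (f : H) :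
    fusionProjR K f = K.starProjection f := rfl

theorem fusionProjR_of_mem (K : Submodule ℝ H) [CompleteSpace K] {f : H} (hf : f ∈ K) :
    fusionProjR K f = f :=
  K.starProjection_eq_self_iff.mpr hf

theorem fusionProjR_span_singleton (v x : H) :
    fusionProjR (ℝ ∙ v) x = (⟪v, x⟫_ℝ / ‖v‖ ^ 2) • v :=
  Submodule.starProjection_singleton ℝ x

theorem IsFusionRieszBasisR.iSupIndep {W : ι → Submodule ℝ H} (hW : IsFusionRieszBasisR W) :
    iSupIndep W := by
  classical
  obtain ⟨-, C, _, hC, -, hbounds⟩ := hW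
  rw [iSupIndep_iff_finsetSum_eq_zero_imp_eq_zero]
  intro s v hv hsum
  set f : ι → H := fun i ↦ if i ∈ s then v i else 0
  have hf : ∀ i, f i ∈ W i := fun i ↦ by
    by_cases hi : i ∈ s <;> simp [f, hi, hv]
  have hfv : ∀ i ∈ s, f i = v i := fun i hi ↦ if_pos hi
  have hlower := (hbounds s f hf).1
  rw [Finset.sum_congr rfl hfv, hsum, norm_zero] at hlower
  have hnonneg : ∀ j ∈ s, 0 ≤ ‖f j‖ ^ 2 := fun j _ ↦ sq_nonneg _
  have hsq : ∑ i ∈ s, ‖f i‖ ^ 2 = 0 := (Real.sqrt_eq_zero (Finset.sum_nonneg hnonneg)).mp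
    ((nonpos_of_mul_nonpos_right hlower hC).antisymm (Real.sqrt_nonneg _))
  intro i hi
  rw [← hfv i hi, ← norm_eq_zero, ← sq_eq_zero_iff]
  exact (Finset.sum_eq_zero_iff_of_nonneg hnonneg).mp hsq i hi

variable [Fintype ι]

noncomputable def fusionSynthesisR (W : ι → Submodule ℝ H) : PiLp 2 (fun i ↦ W i) →L[ℝ] H :=
  ∑ i, (W i).subtypeL.comp (PiLp.proj 2 (fun i ↦ W i) i)

theorem fusionSynthesisR_apply (W : ι → Submodule ℝ H) (x : PiLp 2 (fun i ↦ W i)) :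
    fusionSynthesisR W x = ∑ i, (x i : H) := by
  simp [fusionSynthesisR]

theorem exists_fusionSynthesisR_eq_sum (W : ι → Submodule ℝ H) (J : Finset ι) {f : ι → H}
    (hf : ∀ j, f j ∈ W j) : ∃ x : PiLp 2 (fun i ↦ W i),
      ‖x‖ = √(∑ j ∈ J, ‖f j‖ ^ 2) ∧ fusionSynthesisR W x = ∑ j ∈ J, f j := by
  classical
  refine ⟨WithLp.toLp 2 fun i ↦ if i ∈ J then ⟨f i, hf i⟩ else 0, ?_, ?_⟩
  · simp [PiLp.norm_eq_of_L2, apply_ite, ite_pow, Finset.sum_ite_mem]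
  · simp [fusionSynthesisR_apply, apply_ite, Finset.sum_ite_mem]

theorem injective_fusionSynthesisR {W : ι → Submodule ℝ H} (hW : iSupIndep W) :
    Function.Injective (fusionSynthesisR W) := by
  refine (injective_iff_map_eq_zero _).mpr fun x hx ↦ ?_
  rw [fusionSynthesisR_apply] at hx
  have := (iSupIndep_iff_finsetSum_eq_zero_imp_eq_zero W).mp hW Finset.univ (fun i ↦ x i)
    (fun i _ ↦ (x i).2) hx
  ext i
  simpa using this i (Finset.mem_univ i)

theorem isFusionRieszBasisR_of_iSupIndep [FiniteDimensional ℝ H] {W : ι → Submodule ℝ H}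
    (hind : iSupIndep W) (htop : ⨆ i, W i = ⊤) : IsFusionRieszBasisR W := by
  set T := fusionSynthesisR W
  obtain ⟨K, hK, hT⟩ := (T : PiLp 2 (fun i ↦ W i) →ₗ[ℝ] H).exists_antilipschitzWith
    (LinearMap.ker_eq_bot.mpr (injective_fusionSynthesisR hind))
  refine ⟨eq_top_iff.mpr (htop ▸ Submodule.le_topologicalClosure _), (K : ℝ)⁻¹,
    max ‖T‖ (K : ℝ)⁻¹, by positivity, le_max_right _ _, fun J f hf ↦ ?_⟩
  obtain ⟨x, hx, hTx⟩ := exists_fusionSynthesisR_eq_sum W J hf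
  rw [← hx, ← hTx]
  constructor
  · rw [inv_mul_le_iff₀ (by positivity)]
    exact hT.le_mul_norm (map_zero _) x
  · exact (T.le_opNorm x).trans (mul_le_mul_of_nonneg_right (le_max_left _ _) (norm_nonneg x))

theorem injective_sum_fusionProjR [FiniteDimensional ℝ H] {W : ι → Submodule ℝ H}
    (htop : ⨆ i, W i = ⊤) : Function.Injective ⇑(∑ i, fusionProjR (W i)) := by
  refine (injective_iff_map_eq_zero (∑ i, fusionProjR (W i))).mpr fun f hf ↦ ?_
  have hsq : ∑ i, ‖(W i).orthogonalProjectionOnto f‖ ^ 2 = 0 := by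
    simp_rw [← Submodule.re_inner_starProjection_eq_normSq, RCLike.re_to_real, ← sum_inner]
    convert inner_zero_left f
    simpa [fusionProjR_apply] using hf
  have hperp : ∀ i, f ∈ (W i)ᗮ := fun i ↦ by
    rw [← Submodule.orthogonalProjectionOnto_eq_zero_iff, ← norm_eq_zero, ← sq_eq_zero_iff]
    exact (Finset.sum_eq_zero_iff_of_nonneg fun j _ ↦ sq_nonneg _).mp hsq i (Finset.mem_univ i)
  have : f ∈ (⨆ i, W i)ᗮ := Submodule.iInf_orthogonal W ▸ Submodule.mem_iInf _ |>.mpr hperp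
  rwa [htop, Submodule.top_orthogonal_eq_bot, Submodule.mem_bot] at this

theorem exists_fusionFrameOperatorR [FiniteDimensional ℝ H] {W : ι → Submodule ℝ H}
    (htop : ⨆ i, W i = ⊤) : ∃ S : H ≃L[ℝ] H, ∀ f, S f = ∑ i, fusionProjR (W i) f :=
  ⟨(LinearEquiv.ofInjectiveEndo ((∑ i, fusionProjR (W i) : H →L[ℝ] H) : H →ₗ[ℝ] H)
    (injective_sum_fusionProjR htop)).toContinuousLinearEquiv, fun f ↦ by simp⟩

theorem sum_fusionProjR_symm_fusionProjR_eq_self {W V : ι → Submodule ℝ H}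
    [∀ i, CompleteSpace (W i)] [∀ i, CompleteSpace (V i)] {S : H ≃L[ℝ] H}
    (hS : ∀ f, S f = ∑ i, fusionProjR (W i) f) (hV : ∀ i, ∀ x ∈ W i, S.symm x ∈ V i) (f : H) :
    ∑ i, fusionProjR (V i) (S.symm (fusionProjR (W i) f)) = f := by
  have hmem : ∀ i, S.symm (fusionProjR (W i) f) ∈ V i := fun i ↦
    hV i _ (Submodule.coe_mem _)
  rw [Finset.sum_congr rfl fun i _ ↦ fusionProjR_of_mem _ (hmem i), ← map_sum, ← hS,
    S.symm_apply_apply]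

end FusionFrame

section Example

local notation "ℝ³" => EuclideanSpace ℝ (Fin 3)
local notation "𝐞" i:max => EuclideanSpace.single (i : Fin 3) (1 : ℝ)

noncomputable def rieszVec : Fin 3 → ℝ³ := ![𝐞 0, 𝐞 0 + 𝐞 1, 𝐞 2]

noncomputable def dualVec : Fin 3 → ℝ³ := ![𝐞 0 - 𝐞 1, (2 : ℝ) • 𝐞 1, 𝐞 2]

noncomputable def alternateDual : Fin 3 → Submodule ℝ ℝ³ :=
  ![Submodule.span ℝ {𝐞 0, 𝐞 1}, ℝ ∙ 𝐞 1, ℝ ∙ 𝐞 2]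

theorem linearIndependent_rieszVec : LinearIndependent ℝ rieszVec := by
  rw [Fintype.linearIndependent_iff]
  intro g hg
  have h0 := congrArg (· 0) hg
  have h1 := congrArg (· 1) hg
  have h2 := congrArg (· 2) hg
  simp [Fin.sum_univ_three, rieszVec] at h0 h1 h2
  intro i
  fin_cases i <;> simp <;> linarith

theorem iSup_span_rieszVec : ⨆ i, ℝ ∙ rieszVec i = ⊤ := by
  rw [← Submodule.span_range_eq_iSup]
  exact linearIndependent_rieszVec.span_eq_top_of_card_eq_finrank' (by simp)

theorem sum_fusionProjR_rieszVec (x : ℝ³) :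
    ∑ i, fusionProjR (ℝ ∙ rieszVec i) x =
      WithLp.toLp 2 ![x 0 + (x 0 + x 1) / 2, (x 0 + x 1) / 2, x 2] := by
  have hnorm : ‖𝐞 0 + 𝐞 1‖ ^ 2 = 2 := by
    rw [EuclideanSpace.norm_eq, Real.sq_sqrt (by positivity)]
    simp [Fin.sum_univ_three]
    norm_num
  ext j
  fin_cases j <;> simp [Fin.sum_univ_three, rieszVec, fusionProjR_span_singleton, hnorm,
    inner_add_left, EuclideanSpace.inner_single_left]

theorem symm_rieszVec {S : ℝ³ ≃L[ℝ] ℝ³} (hS : ∀ f, S f = ∑ i, fusionProjR (ℝ ∙ rieszVec i) f)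
    (i : Fin 3) : S.symm (rieszVec i) = dualVec i := by
  rw [S.symm_apply_eq, hS, sum_fusionProjR_rieszVec]
  fin_cases i <;> ext j <;> fin_cases j <;> simp [rieszVec, dualVec]

theorem dualVec_mem_alternateDual (i : Fin 3) : dualVec i ∈ alternateDual i := by
  fin_cases i
  · exact sub_mem (Submodule.subset_span (by simp)) (Submodule.subset_span (by simp))
  · exact Submodule.smul_mem _ _ (Submodule.mem_span_singleton_self _)
  · exact Submodule.mem_span_singleton_self _

theorem not_isFusionRieszBasisR_alternateDual : ¬ IsFusionRieszBasisR alternateDual := by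
  intro hV
  have hdisj := hV.iSupIndep.pairwiseDisjoint (show (0 : Fin 3) ≠ 1 by decide)
  have h := Submodule.disjoint_def.mp hdisj (𝐞 1) (Submodule.subset_span (by simp))
    (Submodule.mem_span_singleton_self _)
  simp at h

theorem alternateDual_zero_ne_map_symm {S : ℝ³ ≃L[ℝ] ℝ³}
    (hS : ∀ f, S f = ∑ i, fusionProjR (ℝ ∙ rieszVec i) f) :
    alternateDual 0 ≠ (ℝ ∙ rieszVec 0).map ((S.symm : ℝ³ →L[ℝ] ℝ³) : ℝ³ →ₗ[ℝ] ℝ³) := by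
  intro h
  have he : 𝐞 0 ∈ alternateDual 0 := Submodule.subset_span (by simp)
  obtain ⟨y, hy, hye⟩ := h ▸ he
  obtain ⟨c, rfl⟩ := Submodule.mem_span_singleton.mp hy
  have h0 := congrArg (· 0) hye
  have h1 := congrArg (· 1) hye
  simp [symm_rieszVec hS, dualVec] at h0 h1
  linarith

end Example

/-- There is a fusion Riesz basis of `ℝ³` admitting an alternate dual fusion frame
distinct from its canonical dual, and that alternate dual is not a fusion Riesz basis.
Concretely `W₁ = span{(1,0,0)}`, `W₂ = span{(1,1,0)}`, `W₃ = span{(0,0,1)}` and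
`V₁ = ℝ²×{0}`, `V₂ = span{(0,1,0)}`, `V₃ = span{(0,0,1)}`. -/
theorem fusion_riesz_basis_with_non_riesz_alternate_dual :
    ∃ W V : Fin 3 → Submodule ℝ (EuclideanSpace ℝ (Fin 3)),
      W = ![Submodule.span ℝ {EuclideanSpace.single 0 (1 : ℝ)},
            Submodule.span ℝ {(EuclideanSpace.single 0 (1 : ℝ) + EuclideanSpace.single 1 (1 : ℝ))},
            Submodule.span ℝ {EuclideanSpace.single 2 (1 : ℝ)}] ∧
      V = ![Submodule.span ℝ {EuclideanSpace.single 0 (1 : ℝ), EuclideanSpace.single 1 (1 : ℝ)},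
            Submodule.span ℝ {EuclideanSpace.single 1 (1 : ℝ)},
            Submodule.span ℝ {EuclideanSpace.single 2 (1 : ℝ)}] ∧
      IsFusionRieszBasisR W ∧
      ∃ SW : EuclideanSpace ℝ (Fin 3) ≃L[ℝ] EuclideanSpace ℝ (Fin 3),
        (∀ f, SW f = ∑ i : Fin 3, fusionProjR (W i) f) ∧
        (∀ f : EuclideanSpace ℝ (Fin 3),
          ∑ i : Fin 3, fusionProjR (V i) (SW.symm (fusionProjR (W i) f)) = f) ∧
        (∃ i : Fin 3, V i ≠ (W i).map ((SW.symm : EuclideanSpace ℝ (Fin 3) →L[ℝ] EuclideanSpace ℝ (Fin 3)) : EuclideanSpace ℝ (Fin 3) →ₗ[ℝ] EuclideanSpace ℝ (Fin 3))) ∧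
        ¬ IsFusionRieszBasisR V := by
  obtain ⟨S, hS⟩ := exists_fusionFrameOperatorR iSup_span_rieszVec
  have hdual : ∀ i, ∀ x ∈ ℝ ∙ rieszVec i, S.symm x ∈ alternateDual i := fun i x hx ↦ by
    obtain ⟨c, rfl⟩ := Submodule.mem_span_singleton.mp hx
    rw [map_smul, symm_rieszVec hS]
    exact Submodule.smul_mem _ c (dualVec_mem_alternateDual i)
  refine ⟨fun i ↦ ℝ ∙ rieszVec i, alternateDual, ?_, rfl,
    isFusionRieszBasisR_of_iSupIndep linearIndependent_rieszVec.iSupIndep_span_singleton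
      iSup_span_rieszVec,
    S, hS, sum_fusionProjR_symm_fusionProjR_eq_self hS hdual,
    ⟨0, alternateDual_zero_ne_map_symm hS⟩, not_isFusionRieszBasisR_alternateDual⟩
  funext i
  fin_cases i <;> rfl
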